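/- arXiv:2108.09612 — 4 statements merged into one kernel-verified Lean document; each statement's English description precedes it below -/
import Mathlib

section
/- Let H, λ, λ1 be positive integers and m a nonnegative integer with λ1 ≤ λ, 1 ≤ λ1, λ - λ1 ≤ m, λ1 ≤ H - m, and m + λ1 ≤ H. Then C(H-1, m)·C(H-m-1, λ1-1)·C(m, λ-λ1) + C(H-1, m-1)·C(H-m, λ1)·C(m-1, λ-λ1-1) = (λ/H)·C(H, m)·C(H-m, λ1)·C(m, λ-λ1), i.e., H·[C(H-1,m)·C(H-m-1,λ1-1)·C(m,λ-λ1) + C(H-1,m-1)·C(H-m,λ1)·C(m-1,λ-λ1-1)] = λ·C(H,m)·C(H-m,λ1)·C(m,λ-λ1). -/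
/-!
With `k = λ - λ1`, both sides are multiples of `P = C(H,m) C(H-m,λ1) C(m,k)`. The absorption
identities `H C(H-1,m) = (H-m) C(H,m)` and `(H-m) C(H-m-1,λ1-1) = λ1 C(H-m,λ1)` turn `H` times the
first summand into `λ1 P`; `H C(H-1,m-1) = m C(H,m)` and `m C(m-1,k-1) = k C(m,k)` turn `H` times
the second into `k P`. Since `C(n,k) = 0` off range, these identities hold for all natural `n, k`,
so the degenerate cases `λ1 = 0`, `k = 0`, `m = 0` need no separate treatment.
-/

/-- Binomial coefficient with integer arguments, following the convention that
`C(n,k) = 0` whenever `k < 0` or `k > n` (in particular when `n < 0 ≤ k`). -/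
def zchoose (n k : ℤ) : ℕ := if 0 ≤ k ∧ k ≤ n then n.toNat.choose k.toNat else 0

theorem zchoose_natCast (n k : ℕ) : zchoose n k = n.choose k := by
  unfold zchoose
  split_ifs with h
  · simp
  · rw [Nat.choose_eq_zero_of_lt (by omega)]

theorem zchoose_of_neg {n k : ℤ} (hk : k < 0) : zchoose n k = 0 := by
  simp [zchoose, not_le.mpr hk]

theorem natCast_add_one_sub_one (n : ℕ) : ((n + 1 : ℕ) : ℤ) - 1 = n := by
  push_cast; ring

theorem natCast_mul_zchoose_sub_one (n k : ℕ) :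
    n * zchoose ((n : ℤ) - 1) ((k : ℤ) - 1) = k * zchoose n k := by
  cases k with
  | zero => simp [zchoose_of_neg]
  | succ k =>
    cases n with
    | zero => rw [zchoose_natCast, Nat.choose_zero_succ, zero_mul, mul_zero]
    | succ n =>
      rw [natCast_add_one_sub_one, natCast_add_one_sub_one, zchoose_natCast, zchoose_natCast]
      exact (Nat.add_one_mul_choose_eq n k).trans (mul_comm _ _)

theorem natCast_mul_zchoose_sub_one_left (n k : ℕ) :
    n * zchoose ((n : ℤ) - 1) k = (n - k) * zchoose n k := by
  cases n with
  | zero => simp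
  | succ n =>
    rw [natCast_add_one_sub_one, zchoose_natCast, zchoose_natCast, mul_comm]
    exact (Nat.choose_mul_succ_eq n k).trans (mul_comm _ _)

theorem stmt1_general (H lam lam1 m : ℕ)
    (h11 : lam1 ≤ lam) (h4 : m + lam1 ≤ H) :
    H * (zchoose ((H : ℤ) - 1) (m : ℤ) * zchoose ((H : ℤ) - m - 1) ((lam1 : ℤ) - 1)
            * zchoose (m : ℤ) ((lam : ℤ) - lam1)
        + zchoose ((H : ℤ) - 1) ((m : ℤ) - 1) * zchoose ((H : ℤ) - m) (lam1 : ℤ)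
            * zchoose ((m : ℤ) - 1) ((lam : ℤ) - lam1 - 1))
      = lam * (zchoose (H : ℤ) (m : ℤ) * zchoose ((H : ℤ) - m) (lam1 : ℤ)
            * zchoose (m : ℤ) ((lam : ℤ) - lam1)) := by
  obtain ⟨k, rfl⟩ := Nat.exists_eq_add_of_le h11
  obtain ⟨r, rfl⟩ := Nat.exists_eq_add_of_le (le_of_add_le_left h4)
  have hr : ((m + r : ℕ) : ℤ) - m = r := by push_cast; ring
  have hk : ((lam1 + k : ℕ) : ℤ) - lam1 = k := by push_cast; ring
  rw [hr, hk]
  have hH_m := natCast_mul_zchoose_sub_one_left (m + r) m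
  have hr_lam1 := natCast_mul_zchoose_sub_one r lam1
  have hH_m1 := natCast_mul_zchoose_sub_one (m + r) m
  have hm_k := natCast_mul_zchoose_sub_one m k
  rw [Nat.add_sub_cancel_left] at hH_m
  linear_combination
    (zchoose (r - 1) (lam1 - 1) * zchoose m k) * hH_m
      + (zchoose (m + r : ℕ) m * zchoose m k) * hr_lam1
      + (zchoose r lam1 * zchoose (m - 1) (k - 1)) * hH_m1
      + (zchoose (m + r : ℕ) m * zchoose r lam1) * hm_k

/-- `H·[C(H-1,m)·C(H-m-1,λ1-1)·C(m,λ-λ1) + C(H-1,m-1)·C(H-m,λ1)·C(m-1,λ-λ1-1)]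
      = λ·C(H,m)·C(H-m,λ1)·C(m,λ-λ1)` for positive `H, λ, λ1` and nonnegative `m`
with `λ1 ≤ λ`, `1 ≤ λ1`, `λ - λ1 ≤ m`, `λ1 ≤ H - m`, `m + λ1 ≤ H`. -/
theorem stmt1 (H lam lam1 m : ℕ) (hH : 0 < H) (hlam : 0 < lam) (hlam1 : 1 ≤ lam1)
    (h11 : lam1 ≤ lam) (h2 : lam - lam1 ≤ m) (h3 : lam1 ≤ H - m) (h4 : m + lam1 ≤ H) :
    H * (zchoose ((H : ℤ) - 1) (m : ℤ) * zchoose ((H : ℤ) - m - 1) ((lam1 : ℤ) - 1)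
            * zchoose (m : ℤ) ((lam : ℤ) - lam1)
        + zchoose ((H : ℤ) - 1) ((m : ℤ) - 1) * zchoose ((H : ℤ) - m) (lam1 : ℤ)
            * zchoose ((m : ℤ) - 1) ((lam : ℤ) - lam1 - 1))
      = lam * (zchoose (H : ℤ) (m : ℤ) * zchoose ((H : ℤ) - m) (lam1 : ℤ)
            * zchoose (m : ℤ) ((lam : ℤ) - lam1)) :=
  stmt1_general H lam lam1 m h11 h4
end

section
/- Given a (K1, F1, Z1, S1) PDA P = (p_{j1,k1}) and a (K2, F2, Z2, S2) PDA A = (a_{j2,k2}), define the (F1·F2) × (K1·K2) array L by L_{(j1,j2),(k1,k2)} = a_{j2,k2} + (p_{j1,k1} - 1)·S2 if both p_{j1,k1} and a_{j2,k2} are integers, and L_{(j1,j2),(k1,k2)} = * otherwise. Then L is a (K1·K2, F1·F2, Z1·F2 + (F1-Z1)·Z2, S1·S2) PDA. -/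
open scoped Classical

/-- A `(K, F, Z, S)` placement delivery array: an `F × K` array (rows `ι`, columns `κ`)
over `[S] ∪ {*}` (stars encoded as `none`), satisfying:
every integer entry lies in `[S]`; (C1) each column has exactly `Z` stars;
(C2) each integer of `[S]` appears at least once; (C3) equal integer entries lie in
distinct rows and columns, with stars at the two crossed positions. -/
def IsPDA {ι κ : Type*} [Fintype ι] [Fintype κ] (Z S : ℕ) (P : ι → κ → Option ℕ) : Prop :=
  (∀ j k s, P j k = some s → 1 ≤ s ∧ s ≤ S) ∧
  (∀ k, (Finset.univ.filter (fun j => P j k = none)).card = Z) ∧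
  (∀ s, 1 ≤ s → s ≤ S → ∃ j k, P j k = some s) ∧
  (∀ j₁ k₁ j₂ k₂ s, P j₁ k₁ = some s → P j₂ k₂ = some s → (j₁, k₁) ≠ (j₂, k₂) →
    j₁ ≠ j₂ ∧ k₁ ≠ k₂ ∧ P j₁ k₂ = none ∧ P j₂ k₁ = none)

/-- The product array `L_{(j1,j2),(k1,k2)} = a_{j2,k2} + (p_{j1,k1} - 1)·S2` when both
entries are integers, and `*` otherwise. -/
def prodPDA {ι₁ κ₁ ι₂ κ₂ : Type*} (S₂ : ℕ)
    (P : ι₁ → κ₁ → Option ℕ) (A : ι₂ → κ₂ → Option ℕ) :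
    ι₁ × ι₂ → κ₁ × κ₂ → Option ℕ :=
  fun j k =>
    match P j.1 k.1, A j.2 k.2 with
    | some s₁, some s₂ => some (s₂ + (s₁ - 1) * S₂)
    | _, _ => none

/-!
Writing `s - 1 = (s₂ - 1) + (s₁ - 1)·S₂` shows that `(s₁, s₂) ↦ s₂ + (s₁ - 1)·S₂` is a bijection
`[S₁] × [S₂] → [S₁·S₂]` (division with remainder by `S₂`). So an integer of the product array
determines the integers of `P` and `A` it comes from, and (C3) for the product reduces to (C3)
for `P` when the two `P`-positions differ and to (C3) for `A` otherwise. A column `(k₁, k₂)`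
has a star in row `(j₁, j₂)` iff `p_{j₁,k₁} = *`, or `p_{j₁,k₁} ≠ *` and `a_{j₂,k₂} = *`,
which gives `Z₁·F₂ + (F₁ - Z₁)·Z₂` stars.
-/

section Encoding

variable {S₁ S₂ s₁ s₂ t₁ t₂ : ℕ}

lemma add_pred_mul_le (hs₁ : 1 ≤ s₁) (hs₁' : s₁ ≤ S₁) (hs₂' : s₂ ≤ S₂) :
    s₂ + (s₁ - 1) * S₂ ≤ S₁ * S₂ := by
  obtain ⟨n, rfl⟩ := Nat.exists_eq_add_of_le' (hs₁.trans hs₁')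
  have : s₁ - 1 ≤ n := by omega
  nlinarith

lemma add_pred_mul_injective (hs₁ : 1 ≤ s₁) (hs₂ : 1 ≤ s₂) (hs₂' : s₂ ≤ S₂)
    (ht₁ : 1 ≤ t₁) (ht₂ : 1 ≤ t₂) (ht₂' : t₂ ≤ S₂)
    (h : s₂ + (s₁ - 1) * S₂ = t₂ + (t₁ - 1) * S₂) : s₁ = t₁ ∧ s₂ = t₂ := by
  have hS : 0 < S₂ := by omega
  have hdivmod {u₁ u₂ : ℕ} (hu₂' : u₂ ≤ S₂) (hu₂ : 1 ≤ u₂) :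
      ((u₂ - 1) + S₂ * (u₁ - 1)) / S₂ = u₁ - 1 ∧ ((u₂ - 1) + S₂ * (u₁ - 1)) % S₂ = u₂ - 1 :=
    (Nat.div_mod_unique hS).2 ⟨rfl, by omega⟩
  have hst : (s₂ - 1) + S₂ * (s₁ - 1) = (t₂ - 1) + S₂ * (t₁ - 1) := by
    rw [Nat.mul_comm S₂, Nat.mul_comm S₂]; omega
  have hs := hdivmod (u₁ := s₁) hs₂' hs₂
  have ht := hdivmod (u₁ := t₁) ht₂' ht₂
  rw [hst] at hs
  omega

lemma exists_add_pred_mul_eq {s : ℕ} (hs : 1 ≤ s) (hs' : s ≤ S₁ * S₂) :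
    ∃ s₁ s₂, 1 ≤ s₁ ∧ s₁ ≤ S₁ ∧ 1 ≤ s₂ ∧ s₂ ≤ S₂ ∧ s = s₂ + (s₁ - 1) * S₂ := by
  have hS : 0 < S₂ := Nat.pos_of_ne_zero (by rintro rfl; omega)
  refine ⟨(s - 1) / S₂ + 1, (s - 1) % S₂ + 1, Nat.le_add_left _ _, ?_, Nat.le_add_left _ _,
    Nat.mod_lt _ hS, ?_⟩
  · have : (s - 1) / S₂ < S₁ := (Nat.div_lt_iff_lt_mul hS).2 (by omega)
    omega
  · have := Nat.div_add_mod' (s - 1) S₂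
    simp only [Nat.add_sub_cancel]
    omega

end Encoding

lemma IsPDA.le_of_eq_some {ι κ : Type*} [Fintype ι] [Fintype κ] {Z S : ℕ}
    {P : ι → κ → Option ℕ} (hP : IsPDA Z S P) {j : ι} {k : κ} {s : ℕ}
    (h : P j k = some s) : 1 ≤ s ∧ s ≤ S :=
  hP.1 j k s h

section Product

variable {ι₁ κ₁ ι₂ κ₂ : Type*} {S₂ : ℕ} {P : ι₁ → κ₁ → Option ℕ} {A : ι₂ → κ₂ → Option ℕ}

lemma prodPDA_eq_none_iff {j : ι₁ × ι₂} {k : κ₁ × κ₂} :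
    prodPDA S₂ P A j k = none ↔ P j.1 k.1 = none ∨ A j.2 k.2 = none := by
  unfold prodPDA
  rcases P j.1 k.1 with _ | s₁ <;> rcases A j.2 k.2 with _ | s₂ <;> simp

lemma prodPDA_eq_some_iff {j : ι₁ × ι₂} {k : κ₁ × κ₂} {s : ℕ} :
    prodPDA S₂ P A j k = some s ↔
      ∃ s₁ s₂, P j.1 k.1 = some s₁ ∧ A j.2 k.2 = some s₂ ∧ s = s₂ + (s₁ - 1) * S₂ := by
  unfold prodPDA
  rcases P j.1 k.1 with _ | s₁ <;> rcases A j.2 k.2 with _ | s₂ <;> simp [eq_comm]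

variable [Fintype ι₁] [Fintype κ₁] [Fintype ι₂] [Fintype κ₂] {Z₁ S₁ Z₂ : ℕ}

lemma prodPDA_mem_range (hP : IsPDA Z₁ S₁ P) (hA : IsPDA Z₂ S₂ A)
    {j : ι₁ × ι₂} {k : κ₁ × κ₂} {s : ℕ} (h : prodPDA S₂ P A j k = some s) :
    1 ≤ s ∧ s ≤ S₁ * S₂ := by
  obtain ⟨s₁, s₂, h₁, h₂, rfl⟩ := prodPDA_eq_some_iff.1 h
  obtain ⟨hs₁, hs₁'⟩ := hP.le_of_eq_some h₁
  obtain ⟨hs₂, hs₂'⟩ := hA.le_of_eq_some h₂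
  exact ⟨by omega, add_pred_mul_le hs₁ hs₁' hs₂'⟩

lemma card_prodPDA_stars (hP : IsPDA Z₁ S₁ P) (hA : IsPDA Z₂ S₂ A) (k : κ₁ × κ₂) :
    (Finset.univ.filter (fun j => prodPDA S₂ P A j k = none)).card =
      Z₁ * Fintype.card ι₂ + (Fintype.card ι₁ - Z₁) * Z₂ := by
  set starsP := Finset.univ.filter (fun j₁ => P j₁ k.1 = none)
  set starsA := Finset.univ.filter (fun j₂ => A j₂ k.2 = none)
  have hsplit : Finset.univ.filter (fun j => prodPDA S₂ P A j k = none) =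
      starsP ×ˢ Finset.univ ∪ starsPᶜ ×ˢ starsA := by
    ext j
    simp only [starsP, starsA, Finset.mem_filter, Finset.mem_union, Finset.mem_product,
      Finset.mem_compl, Finset.mem_univ, true_and, and_true, prodPDA_eq_none_iff]
    tauto
  have hdisj : Disjoint (starsP ×ˢ (Finset.univ : Finset ι₂)) (starsPᶜ ×ˢ starsA) :=
    Finset.disjoint_product.2 (Or.inl disjoint_compl_right)
  rw [hsplit, Finset.card_union_of_disjoint hdisj, Finset.card_product, Finset.card_product,
    Finset.card_compl, Finset.card_univ, hP.2.1 k.1, hA.2.1 k.2]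

lemma prodPDA_surjective (hP : IsPDA Z₁ S₁ P) (hA : IsPDA Z₂ S₂ A)
    {s : ℕ} (hs : 1 ≤ s) (hs' : s ≤ S₁ * S₂) : ∃ j k, prodPDA S₂ P A j k = some s := by
  obtain ⟨s₁, s₂, hs₁, hs₁', hs₂, hs₂', rfl⟩ := exists_add_pred_mul_eq hs hs'
  obtain ⟨j₁, k₁, h₁⟩ := hP.2.2.1 s₁ hs₁ hs₁'
  obtain ⟨j₂, k₂, h₂⟩ := hA.2.2.1 s₂ hs₂ hs₂'
  exact ⟨(j₁, j₂), (k₁, k₂), prodPDA_eq_some_iff.2 ⟨s₁, s₂, h₁, h₂, rfl⟩⟩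

lemma prodPDA_cross_stars (hP : IsPDA Z₁ S₁ P) (hA : IsPDA Z₂ S₂ A)
    {j j' : ι₁ × ι₂} {k k' : κ₁ × κ₂} {s : ℕ}
    (h : prodPDA S₂ P A j k = some s) (h' : prodPDA S₂ P A j' k' = some s)
    (hne : (j, k) ≠ (j', k')) :
    j ≠ j' ∧ k ≠ k' ∧ prodPDA S₂ P A j k' = none ∧ prodPDA S₂ P A j' k = none := by
  obtain ⟨s₁, s₂, hp, ha, rfl⟩ := prodPDA_eq_some_iff.1 h
  obtain ⟨t₁, t₂, hp', ha', heq⟩ := prodPDA_eq_some_iff.1 h'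
  obtain ⟨hs₁, -⟩ := hP.le_of_eq_some hp
  obtain ⟨hs₂, hs₂'⟩ := hA.le_of_eq_some ha
  obtain ⟨ht₁, -⟩ := hP.le_of_eq_some hp'
  obtain ⟨ht₂, ht₂'⟩ := hA.le_of_eq_some ha'
  obtain ⟨rfl, rfl⟩ := add_pred_mul_injective hs₁ hs₂ hs₂' ht₁ ht₂ ht₂' heq
  simp only [ne_eq, prodPDA_eq_none_iff]
  by_cases hPpos : (j.1, k.1) = (j'.1, k'.1)
  · have hApos : (j.2, k.2) ≠ (j'.2, k'.2) := fun hApos =>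
      hne (by simp_all [Prod.ext_iff])
    obtain ⟨d₁, d₂, d₃, d₄⟩ := hA.2.2.2 _ _ _ _ _ ha ha' hApos
    exact ⟨fun e => d₁ (congrArg Prod.snd e), fun e => d₂ (congrArg Prod.snd e),
      Or.inr d₃, Or.inr d₄⟩
  · obtain ⟨d₁, d₂, d₃, d₄⟩ := hP.2.2.2 _ _ _ _ _ hp hp' hPpos
    exact ⟨fun e => d₁ (congrArg Prod.fst e), fun e => d₂ (congrArg Prod.fst e),
      Or.inl d₃, Or.inl d₄⟩

theorem IsPDA.prodPDA (hP : IsPDA Z₁ S₁ P) (hA : IsPDA Z₂ S₂ A) :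
    IsPDA (Z₁ * Fintype.card ι₂ + (Fintype.card ι₁ - Z₁) * Z₂) (S₁ * S₂) (prodPDA S₂ P A) :=
  ⟨fun _ _ _ h => prodPDA_mem_range hP hA h, card_prodPDA_stars hP hA,
    fun _ hs hs' => prodPDA_surjective hP hA hs hs',
    fun _ _ _ _ _ h h' hne => prodPDA_cross_stars hP hA h h' hne⟩

end Product

/-- The product of a `(K1,F1,Z1,S1)` PDA and a `(K2,F2,Z2,S2)` PDA is a
`(K1·K2, F1·F2, Z1·F2 + (F1-Z1)·Z2, S1·S2)` PDA. -/
theorem stmt4 {F₁ K₁ F₂ K₂ Z₁ S₁ Z₂ S₂ : ℕ}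
    (P : Fin F₁ → Fin K₁ → Option ℕ) (A : Fin F₂ → Fin K₂ → Option ℕ)
    (hP : IsPDA Z₁ S₁ P) (hA : IsPDA Z₂ S₂ A) :
    IsPDA (Z₁ * F₂ + (F₁ - Z₁) * Z₂) (S₁ * S₂) (prodPDA S₂ P A) := by
  simpa only [Fintype.card_fin] using hP.prodPDA hA
end

section
/- Let H, r, a, ω, λ be positive integers with max{ω, λ} ≤ r < H and a < H. Define the array P with rows indexed by binary vectors f ∈ {0,1}^H of weight a, and columns indexed by pairs (T, b) with T ∈ ([H] choose r) and b ∈ {0,1}^r of weight r-ω, where P_{f,(T,b)} = (e, C) if d(f|_T, b) = r - λ (with e agreeing with b on T and with f off T, and C = {δ_v ∈ T : f_{δ_v} = b_v}), and P_{f,(T,b)} = * otherwise. Then P satisfies condition C3 of a PDA: if P_{f,(T,b)} = P_{f',(T',b')} = (e, C) are two equal non-star entries at distinct positions, then f ≠ f', (T,b) ≠ (T',b'), and P_{f,(T',b')} = P_{f',(T,b)} = *. -/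
open scoped Classical

/-- Hamming weight of a binary vector of length `H`. -/
def wt {H : ℕ} (f : Fin H → Bool) : ℕ :=
  (Finset.univ.filter (fun i => f i = true)).card

/-- Hamming distance `d(f|_T, b)` between the restrictions to `T` of `f` and `b`. -/
def distOn {H : ℕ} (T : Finset (Fin H)) (f b : Fin H → Bool) : ℕ :=
  (T.filter (fun i => f i ≠ b i)).card

/-- The agreement set `C = {i ∈ T : f_i = b_i}`. -/
def agreeSet {H : ℕ} (T : Finset (Fin H)) (f b : Fin H → Bool) : Finset (Fin H) :=
  T.filter (fun i => f i = b i)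

/-- The vector `e` agreeing with `b` on `T` and with `f` off `T`. -/
def mixVec {H : ℕ} (T : Finset (Fin H)) (f b : Fin H → Bool) : Fin H → Bool :=
  fun i => if i ∈ T then b i else f i

/-! Write `e` and `C` for the common label. Off `T` the vector `b` is `false` and on `T` it
equals `e`, so the column `(T, b)` is determined by `T`; the row `f` is then determined as
well, by `e` off `T` and by `C` on `T`. Conversely, with the same row `f`, any `i ∈ T \ T'` would
have `f i = e i = b i`, i.e. `i ∈ C ⊆ T'`. Hence the two positions differ in both the row and
`T`. At the crossed position `(f, (T', b'))` the agreement set is `C ∪ (T' \ T)`, strictly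
larger than `C`, so the distance drops strictly below `r - λ`. -/

theorem Bool.eq_of_eq_iff_eq {x y z : Bool} (h : x = z ↔ y = z) : x = y := by
  revert x y z
  decide

section Label

variable {H : ℕ} {T T' : Finset (Fin H)} {f f' b b' : Fin H → Bool} {i : Fin H}

lemma mixVec_of_mem (hi : i ∈ T) : mixVec T f b i = b i := if_pos hi

lemma mixVec_of_notMem (hi : i ∉ T) : mixVec T f b i = f i := if_neg hi

lemma mem_agreeSet : i ∈ agreeSet T f b ↔ i ∈ T ∧ f i = b i := Finset.mem_filter

lemma agreeSet_subset : agreeSet T f b ⊆ T := Finset.filter_subset _ _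

lemma distOn_add_card_agreeSet (T : Finset (Fin H)) (f b : Fin H → Bool) :
    distOn T f b + (agreeSet T f b).card = T.card := by
  rw [distOn, agreeSet, Nat.add_comm]
  exact Finset.card_filter_add_card_filter_not _

lemma subset_of_mixVec_eq_of_agreeSet_eq (he : mixVec T f b = mixVec T' f b')
    (hC : agreeSet T f b = agreeSet T' f b') : T ⊆ T' := by
  intro i hi
  by_contra hi'
  have hfb := congrFun he i
  rw [mixVec_of_mem hi, mixVec_of_notMem hi'] at hfb
  exact hi' (agreeSet_subset (hC ▸ mem_agreeSet.2 ⟨hi, hfb.symm⟩))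

lemma eq_of_mixVec_eq_of_agreeSet_eq (hb : ∀ i ∉ T, b i = false)
    (hb' : ∀ i ∉ T, b' i = false) (he : mixVec T f b = mixVec T f' b')
    (hC : agreeSet T f b = agreeSet T f' b') : f = f' ∧ b = b' := by
  have hbb : b = b' := funext fun i => by
    by_cases hi : i ∈ T
    · simpa only [mixVec_of_mem hi] using congrFun he i
    · rw [hb i hi, hb' i hi]
  subst hbb
  refine ⟨funext fun i => ?_, rfl⟩
  by_cases hi : i ∈ T
  · have hiff : f i = b i ↔ f' i = b i := by
      simpa only [mem_agreeSet, hi, true_and] using Finset.ext_iff.1 hC i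
    exact Bool.eq_of_eq_iff_eq hiff
  · simpa only [mixVec_of_notMem hi] using congrFun he i

lemma agreeSet_swap_eq_union (he : mixVec T f b = mixVec T' f' b')
    (hC : agreeSet T f b = agreeSet T' f' b') :
    agreeSet T' f b' = agreeSet T f b ∪ (T' \ T) := by
  ext i
  have hsub : i ∈ agreeSet T f b → i ∈ T' := fun h => agreeSet_subset (hC ▸ h)
  have hei := congrFun he i
  rw [mem_agreeSet] at hsub
  simp only [mem_agreeSet, Finset.mem_union, Finset.mem_sdiff]
  by_cases hi : i ∈ T <;> by_cases hi' : i ∈ T' <;>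
    simp_all only [mixVec_of_mem, mixVec_of_notMem, not_false_eq_true] <;> tauto

lemma distOn_swap_lt (hcard : T.card = T'.card) (hTT : T ≠ T')
    (he : mixVec T f b = mixVec T' f' b') (hC : agreeSet T f b = agreeSet T' f' b') :
    distOn T' f b' < distOn T f b := by
  have hdisj : Disjoint (agreeSet T f b) (T' \ T) :=
    Finset.disjoint_left.2 fun _ hiC hiS => (Finset.mem_sdiff.1 hiS).2 (agreeSet_subset hiC)
  have hnew : 0 < (T' \ T).card := Finset.card_pos.2 <| Finset.sdiff_nonempty.2 fun hsub =>
    hTT (Finset.eq_of_subset_of_card_le hsub hcard.le).symm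
  have hswap := distOn_add_card_agreeSet T' f b'
  rw [agreeSet_swap_eq_union he hC, Finset.card_union_of_disjoint hdisj] at hswap
  have horig := distOn_add_card_agreeSet T f b
  omega

end Label

theorem stmt8_general (H r lam : ℕ)
    (f f' b b' : Fin H → Bool) (T T' : Finset (Fin H))
    (hT : T.card = r) (hT' : T'.card = r)
    (hb0 : ∀ i ∉ T, b i = false) (hb0' : ∀ i ∉ T', b' i = false)
    (hd : distOn T f b = r - lam) (hd' : distOn T' f' b' = r - lam)
    (he : mixVec T f b = mixVec T' f' b')
    (hCeq : agreeSet T f b = agreeSet T' f' b')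
    (hne : ¬ (f = f' ∧ T = T' ∧ b = b')) :
    f ≠ f' ∧ (T, b) ≠ (T', b')
      ∧ distOn T' f b' ≠ r - lam ∧ distOn T f' b ≠ r - lam := by
  have hTT : T ≠ T' := by
    rintro rfl
    obtain ⟨rfl, rfl⟩ := eq_of_mixVec_eq_of_agreeSet_eq hb0 hb0' he hCeq
    exact hne ⟨rfl, rfl, rfl⟩
  have hff : f ≠ f' := by
    rintro rfl
    exact hTT ((subset_of_mixVec_eq_of_agreeSet_eq he hCeq).antisymm
      (subset_of_mixVec_eq_of_agreeSet_eq he.symm hCeq.symm))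
  have hcard : T.card = T'.card := hT.trans hT'.symm
  refine ⟨hff, fun h => hTT (congrArg Prod.fst h), ?_, ?_⟩
  · exact hd ▸ (distOn_swap_lt hcard hTT he hCeq).ne
  · exact hd' ▸ (distOn_swap_lt hcard.symm (Ne.symm hTT) he.symm hCeq.symm).ne

/-- Condition C3 for the array of Construction 1. Rows are `f ∈ {0,1}^H` with
`wt(f) = a`; columns are `(T, b)` with `T` an `r`-subset of `[H]` and `b ∈ {0,1}^r`
(encoded with `b i = false` off `T`) of weight `r-ω`; the entry at `(f,(T,b))` is the
label `(e, C)` if `d(f|_T, b) = r-λ`, and `*` otherwise. If two positions carry the same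
non-star label `(e, C)` and are distinct, then `f ≠ f'`, `(T,b) ≠ (T',b')`, and the two
crossed positions are stars. -/
theorem stmt8 (H r a ω lam : ℕ) (hH : 0 < H) (hr : 0 < r) (ha : 0 < a) (hω : 0 < ω)
    (hl : 0 < lam) (hωr : ω ≤ r) (hlamr : lam ≤ r) (hrH : r < H) (haH : a < H)
    (f f' b b' : Fin H → Bool) (T T' : Finset (Fin H))
    (hT : T.card = r) (hT' : T'.card = r)
    (hf : wt f = a) (hf' : wt f' = a)
    (hb : (T.filter (fun i => b i = true)).card = r - ω)
    (hb' : (T'.filter (fun i => b' i = true)).card = r - ω)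
    (hb0 : ∀ i ∉ T, b i = false) (hb0' : ∀ i ∉ T', b' i = false)
    (hd : distOn T f b = r - lam) (hd' : distOn T' f' b' = r - lam)
    (he : mixVec T f b = mixVec T' f' b')
    (hCeq : agreeSet T f b = agreeSet T' f' b')
    (hne : ¬ (f = f' ∧ T = T' ∧ b = b')) :
    f ≠ f' ∧ (T, b) ≠ (T', b')
      ∧ distOn T' f b' ≠ r - lam ∧ distOn T f' b ≠ r - lam :=
  stmt8_general H r lam f f' b b' T T' hT hT' hb0 hb0' hd hd' he hCeq hne
end

section
/- Fix an r-subset T of [H] and b ∈ {0,1}^r with wt(b) = r-ω, where max{ω,λ} ≤ r < H and a < H. The number of binary vectors f ∈ {0,1}^H of weight a such that d(f|_T, b) > r - λ (equivalently d(f|_T, b) = r - λ' for some λ' with 0 ≤ λ' ≤ λ-1) equals Z' = Σ_{λ'=0}^{λ-1} Σ_{λ1 = max{0,λ'-r+ω}}^{min{ω,λ'}} C(ω, λ1)·C(r-ω, λ'-λ1)·C(H-r, a-ω+2λ1-λ'). -/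
open scoped Classical

/-!
Split `[H]` into `T₀ = {i ∈ T | b i = 0}` (size `ω`), `T₁ = {i ∈ T | b i = 1}` (size `r - ω`)
and the complement of `T` (size `H - r`), and let `x₀, x₁, x₂` be the weights of `f` on these
parts. Then `wt f = x₀ + x₁ + x₂` and `d(f|_T, b) = x₀ + (r - ω - x₁)`. Grouping the vectors `f`
by `λ' = r - d(f|_T, b)` and `λ₁ = ω - x₀` (the numbers of agreements with `b` on `T` and on `T₀`)
pins down `x₀ = ω - λ₁`, `x₁ = λ' - λ₁` and `x₂ = a - ω + 2λ₁ - λ'`, and `f` is then an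
arbitrary choice of supports of these sizes in the three parts.
-/

open Finset

lemma zchoose_sub_self {n : ℤ} (hn : 0 ≤ n) (k : ℤ) : zchoose n (n - k) = zchoose n k := by
  lift n to ℕ using hn
  unfold zchoose
  by_cases hk : 0 ≤ k ∧ k ≤ n
  · obtain ⟨k, rfl⟩ := Int.eq_ofNat_of_zero_le hk.1
    rw [if_pos (by omega), if_pos hk, show (n : ℤ) - k = ((n - k : ℕ) : ℤ) by omega]
    simp only [Int.toNat_natCast]
    exact Nat.choose_symm (by omega)
  · rw [if_neg (by omega), if_neg hk]

section

variable {α : Type*}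

lemma card_filter_powerset_eq_zchoose (s : Finset α) (k : ℤ) :
    #{A ∈ s.powerset | (#A : ℤ) = k} = zchoose #s k := by
  unfold zchoose
  split_ifs with hk
  · lift k to ℕ using hk.1
    simp only [Nat.cast_inj, Int.toNat_natCast, ← powersetCard_eq_filter, card_powersetCard]
  · refine card_eq_zero.mpr (filter_eq_empty_iff.mpr fun A hA hAk => hk ?_)
    have := card_le_card (mem_powerset.mp hA)
    omega

def wtOn (s : Finset α) (f : α → Bool) : ℕ := #{i ∈ s | f i = true}

lemma wtOn_le_card (s : Finset α) (f : α → Bool) : wtOn s f ≤ #s :=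
  card_filter_le _ _

variable [DecidableEq α]

lemma wtOn_union {s t : Finset α} (h : Disjoint s t) (f : α → Bool) :
    wtOn (s ∪ t) f = wtOn s f + wtOn t f := by
  rw [wtOn, filter_union, card_union_of_disjoint (disjoint_filter_filter h)]; rfl

variable [Fintype α]

lemma card_filter_restrict_eq_card_filter_powerset {s₀ s₁ : Finset α} (h : Disjoint s₀ s₁)
    (P : Finset α × Finset α × Finset α → Prop) [DecidablePred P] :
    #{f : α → Bool | P ({i ∈ s₀ | f i}, {i ∈ s₁ | f i}, {i ∈ (s₀ ∪ s₁)ᶜ | f i})}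
      = #{x ∈ s₀.powerset ×ˢ s₁.powerset ×ˢ (s₀ ∪ s₁)ᶜ.powerset | P x} := by
  set s₂ := (s₀ ∪ s₁)ᶜ
  have hinv : ∀ A B C, A ⊆ s₀ → B ⊆ s₁ → C ⊆ s₂ →
      ({i ∈ s₀ | i ∈ A ∨ i ∈ B ∨ i ∈ C}, {i ∈ s₁ | i ∈ A ∨ i ∈ B ∨ i ∈ C},
        {i ∈ s₂ | i ∈ A ∨ i ∈ B ∨ i ∈ C}) = (A, B, C) := by
    intro A B C hA hB hC
    have := disjoint_left.mp h
    simp only [Prod.mk.injEq, s₂, subset_iff, mem_compl, mem_union] at *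
    refine ⟨?_, ?_, ?_⟩ <;> ext i <;> simp only [mem_filter, mem_compl, mem_union] <;> grind
  refine card_nbij' (fun f => ({i ∈ s₀ | f i}, {i ∈ s₁ | f i}, {i ∈ s₂ | f i}))
    (fun x i => decide (i ∈ x.1 ∨ i ∈ x.2.1 ∨ i ∈ x.2.2)) ?_ ?_ ?_ ?_
  · intro f hf
    simp only [coe_filter, mem_univ, true_and, Set.mem_ofPred_eq, mem_product,
      mem_powerset] at hf ⊢
    exact ⟨⟨filter_subset _ _, filter_subset _ _, filter_subset _ _⟩, hf⟩
  · rintro ⟨A, B, C⟩ hx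
    simp only [coe_filter, Set.mem_ofPred_eq, mem_product, mem_powerset] at hx
    simpa only [coe_filter, mem_univ, true_and, Set.mem_ofPred_eq, decide_eq_true_eq,
      hinv A B C hx.1.1 hx.1.2.1 hx.1.2.2] using hx.2
  · intro f _
    funext i
    simp only [mem_filter, s₂, mem_compl, mem_union]
    by_cases h₀ : i ∈ s₀ <;> by_cases h₁ : i ∈ s₁ <;> simp [h₀, h₁]
  · rintro ⟨A, B, C⟩ hx
    simp only [coe_filter, Set.mem_ofPred_eq, mem_product, mem_powerset] at hx
    simpa only [decide_eq_true_eq] using hinv A B C hx.1.1 hx.1.2.1 hx.1.2.2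

/- The prescribed weights are integers so that a negative one simply gives the count `0`. -/
lemma card_filter_wtOn_eq_zchoose {s₀ s₁ : Finset α} (h : Disjoint s₀ s₁) (k₀ k₁ k₂ : ℤ) :
    #{f : α → Bool | (wtOn s₀ f : ℤ) = k₀ ∧ (wtOn s₁ f : ℤ) = k₁ ∧ (wtOn (s₀ ∪ s₁)ᶜ f : ℤ) = k₂}
      = zchoose #s₀ k₀ * zchoose #s₁ k₁ * zchoose #(s₀ ∪ s₁)ᶜ k₂ := by
  refine (card_filter_restrict_eq_card_filter_powerset h
    fun x => (#x.1 : ℤ) = k₀ ∧ (#x.2.1 : ℤ) = k₁ ∧ (#x.2.2 : ℤ) = k₂).trans ?_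
  calc _ = #({A ∈ s₀.powerset | (#A : ℤ) = k₀} ×ˢ {A ∈ s₁.powerset | (#A : ℤ) = k₁} ×ˢ
          {A ∈ (s₀ ∪ s₁)ᶜ.powerset | (#A : ℤ) = k₂}) := by
        congr 1
        ext ⟨A, B, C⟩
        simp only [mem_filter, mem_product]
        tauto
    _ = _ := by simp only [card_product, card_filter_powerset_eq_zchoose, mul_assoc]

end

lemma wt_eq_wtOn_add_wtOn_add_wtOn {H : ℕ} {s₀ s₁ : Finset (Fin H)} (h : Disjoint s₀ s₁)
    (f : Fin H → Bool) : wt f = wtOn s₀ f + wtOn s₁ f + wtOn (s₀ ∪ s₁)ᶜ f := by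
  rw [← wtOn_union h, ← wtOn_union disjoint_compl_right, union_compl]; rfl

lemma distOn_add_wtOn {H : ℕ} (T : Finset (Fin H)) (f b : Fin H → Bool) :
    distOn T f b + wtOn {i ∈ T | b i} f = wtOn {i ∈ T | ¬ b i} f + #{i ∈ T | b i} := by
  simp only [distOn, wtOn, filter_filter, card_filter, ← sum_add_distrib]
  refine sum_congr rfl fun i _ => ?_
  cases b i <;> cases f i <;> rfl

theorem stmt12_general (H r a ω lam : ℕ) (hωr : ω ≤ r) (hlamr : lam ≤ r)
    (T : Finset (Fin H)) (hT : T.card = r) (b : Fin H → Bool)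
    (hb : (T.filter (fun i => b i = true)).card = r - ω) :
    (Finset.univ.filter (fun f : Fin H → Bool =>
        wt f = a ∧ distOn T f b > r - lam)).card
      = ∑ lam' ∈ Finset.range lam, ∑ lam1 ∈ Finset.Icc (lam' + ω - r) (min ω lam'),
          zchoose (ω : ℤ) (lam1 : ℤ) * zchoose ((r : ℤ) - ω) ((lam' : ℤ) - lam1)
            * zchoose ((H : ℤ) - r) ((a : ℤ) - ω + 2 * lam1 - lam') := by
  set T₀ := {i ∈ T | ¬ b i}
  set T₁ := {i ∈ T | b i}
  have hdisj : Disjoint T₀ T₁ := (disjoint_filter_filter_not T T _).symm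
  have hunion : T₀ ∪ T₁ = T := by
    rw [union_comm]; exact filter_union_filter_not_eq (p := fun i => b i = true) T
  have hT₀ : #T₀ = ω := by
    have : #T₁ + #T₀ = #T := card_filter_add_card_filter_not _
    omega
  have hrH : r ≤ H := by simpa [hT] using card_le_univ T
  have hT₂ : #(T₀ ∪ T₁)ᶜ = H - r := by rw [card_compl, Fintype.card_fin, hunion, hT]
  have key : ∀ f, wt f = wtOn T₀ f + wtOn T₁ f + wtOn (T₀ ∪ T₁)ᶜ f ∧
      distOn T f b + wtOn T₁ f = wtOn T₀ f + (r - ω) ∧ wtOn T₀ f ≤ ω ∧ wtOn T₁ f ≤ r - ω :=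
    fun f => ⟨wt_eq_wtOn_add_wtOn_add_wtOn hdisj f, hb ▸ distOn_add_wtOn T f b,
      hT₀ ▸ wtOn_le_card T₀ f, hb ▸ wtOn_le_card T₁ f⟩
  rw [card_eq_sum_card_fiberwise (f := fun f => (⟨r - distOn T f b, ω - wtOn T₀ f⟩ : Σ _ : ℕ, ℕ))
    (t := (range lam).sigma fun lam' => Icc (lam' + ω - r) (min ω lam')), sum_sigma]
  · refine sum_congr rfl fun lam' hlam' => sum_congr rfl fun lam1 hlam1 => ?_
    rw [mem_range] at hlam'
    rw [mem_Icc] at hlam1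
    rw [filter_filter, ← zchoose_sub_self (Int.natCast_nonneg ω)]
    convert card_filter_wtOn_eq_zchoose hdisj ((ω : ℤ) - lam1) ((lam' : ℤ) - lam1)
      ((a : ℤ) - ω + 2 * lam1 - lam') using 3
    · rename_i f _
      simp only [Sigma.mk.inj_iff, heq_eq_eq]
      have := key f
      omega
    · rw [hT₀]
    · rw [hb, Nat.cast_sub hωr]
    · rw [hT₂, Nat.cast_sub hrH]
  · intro f hf
    simp only [coe_filter, mem_univ, true_and, Set.mem_ofPred_eq, mem_coe, mem_sigma, mem_range,
      mem_Icc] at hf ⊢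
    have := key f
    omega

/-- Useless-star count per column of Construction 1. Fix an `r`-subset `T` of `[H]` and
`b ∈ {0,1}^r` of weight `r-ω` (with `max{ω,λ} ≤ r < H`, `a < H`). The number of binary
vectors `f ∈ {0,1}^H` of weight `a` with `d(f|_T, b) > r - λ` equals
`Z' = Σ_{λ'=0}^{λ-1} Σ_{λ1=max{0,λ'-r+ω}}^{min{ω,λ'}}
C(ω,λ1)·C(r-ω,λ'-λ1)·C(H-r, a-ω+2λ1-λ')`. -/
theorem stmt12 (H r a ω lam : ℕ) (hH : 0 < H) (hr : 0 < r) (ha : 0 < a) (hω : 0 < ω)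
    (hl : 0 < lam) (hωr : ω ≤ r) (hlamr : lam ≤ r) (hrH : r < H) (haH : a < H)
    (T : Finset (Fin H)) (hT : T.card = r) (b : Fin H → Bool)
    (hb : (T.filter (fun i => b i = true)).card = r - ω)
    (hb0 : ∀ i ∉ T, b i = false) :
    (Finset.univ.filter (fun f : Fin H → Bool =>
        wt f = a ∧ distOn T f b > r - lam)).card
      = ∑ lam' ∈ Finset.range lam, ∑ lam1 ∈ Finset.Icc (lam' + ω - r) (min ω lam'),
          zchoose (ω : ℤ) (lam1 : ℤ) * zchoose ((r : ℤ) - ω) ((lam' : ℤ) - lam1)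
            * zchoose ((H : ℤ) - r) ((a : ℤ) - ω + 2 * lam1 - lam') :=
  stmt12_general H r a ω lam hωr hlamr T hT b hb
end
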